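/- arXiv:2403.18164 — 9 statements merged into one kernel-verified Lean document; each statement's English description precedes it below -/
import Mathlib

section
/- Let q ∈ ℝⁿ and let x̄ ∈ M(q). Then the only vector x ∈ 𝕏 satisfying x ∈ M(x̄ − x + q) is x = x̄. -/
/-- The best-response set `M(p) = argmax_{x ∈ 𝕏} pᵀx` over the standard simplex. -/
def bestResponse (n : ℕ) (p : Fin n → ℝ) : Set (Fin n → ℝ) :=
  {x ∈ stdSimplex ℝ (Fin n) |
    ∀ y ∈ stdSimplex ℝ (Fin n), ∑ i, p i * y i ≤ ∑ i, p i * x i}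

/-- For any `q ∈ ℝⁿ` and `x̄ ∈ M(q)`, the only `x ∈ 𝕏` with
`x ∈ M(x̄ − x + q)` is `x = x̄`. -/
theorem unique_best_response (n : ℕ) (hn : 1 ≤ n) (q xbar : Fin n → ℝ)
    (hxbar : xbar ∈ bestResponse n q) :
    ∀ x ∈ stdSimplex ℝ (Fin n), x ∈ bestResponse n (xbar - x + q) → x = xbar := by
  intro x hx hxm
  have h1 := hxm.2 xbar hxbar.1
  have h2 := hxbar.2 x hx
  have key : ∑ i, (xbar i - x i) ^ 2 ≤ 0 := by
    have heq : ∑ i, (xbar i - x i) ^ 2 =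
        (∑ i, (xbar - x + q) i * xbar i - ∑ i, (xbar - x + q) i * x i)
        + (∑ i, q i * x i - ∑ i, q i * xbar i) := by
      rw [← Finset.sum_sub_distrib, ← Finset.sum_sub_distrib, ← Finset.sum_add_distrib]
      refine Finset.sum_congr rfl fun i _ => ?_
      simp only [Pi.add_apply, Pi.sub_apply]
      ring
    rw [heq]
    linarith
  have hzero : ∀ i ∈ Finset.univ, (xbar i - x i) ^ 2 = 0 :=
    (Finset.sum_eq_zero_iff_of_nonneg fun i _ => sq_nonneg _).mp
      (le_antisymm key (Finset.sum_nonneg fun i _ => sq_nonneg _))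
  funext i
  have := hzero i (Finset.mem_univ i)
  have := pow_eq_zero_iff (n := 2) (by norm_num) |>.mp this
  linarith [this]
end

section
/- Impartial pairwise comparison rules are positively correlated: for every x ∈ 𝕏 and p ∈ ℝⁿ, pᵀV(x,p) ≥ 0, and if V(x,p) ≠ 0 then pᵀV(x,p) > 0. -/
/-- Impartial pairwise comparison rules are positively correlated:
`pᵀV(x,p) ≥ 0`, and `pᵀV(x,p) > 0` whenever `V(x,p) ≠ 0`. -/
theorem ipc_positive_correlation (n : ℕ) (hn : 1 ≤ n)
    (ρ : Fin n → ℝ → ℝ)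
    (hρ0 : ∀ j v, v ≤ 0 → ρ j v = 0)
    (hρpos : ∀ j v, 0 < v → 0 < ρ j v)
    (x p : Fin n → ℝ) (hx : x ∈ stdSimplex ℝ (Fin n))
    (V : Fin n → ℝ)
    (hV : ∀ i, V i = ∑ j, (x j * ρ i (p i - p j) - x i * ρ j (p j - p i))) :
    0 ≤ ∑ i, p i * V i ∧ (V ≠ 0 → 0 < ∑ i, p i * V i) := by
  obtain ⟨hx0, hx1⟩ := hx
  have key : ∑ i, p i * V i
      = ∑ i, ∑ j, (p i - p j) * (x j * ρ i (p i - p j)) := by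
    calc ∑ i, p i * V i
        = (∑ i, ∑ j, p i * (x j * ρ i (p i - p j)))
          - ∑ i, ∑ j, p i * (x i * ρ j (p j - p i)) := by
          rw [← Finset.sum_sub_distrib]
          refine Finset.sum_congr rfl fun i _ => ?_
          rw [hV, Finset.mul_sum, ← Finset.sum_sub_distrib]
          exact Finset.sum_congr rfl fun j _ => by ring
      _ = (∑ i, ∑ j, p i * (x j * ρ i (p i - p j)))
          - ∑ i, ∑ j, p j * (x j * ρ i (p i - p j)) := by
          rw [Finset.sum_comm (f := fun i j => p i * (x i * ρ j (p j - p i)))]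
      _ = ∑ i, ∑ j, (p i - p j) * (x j * ρ i (p i - p j)) := by
          rw [← Finset.sum_sub_distrib]
          refine Finset.sum_congr rfl fun i _ => ?_
          rw [← Finset.sum_sub_distrib]
          exact Finset.sum_congr rfl fun j _ => by ring
  have hterm : ∀ i j : Fin n, 0 ≤ (p i - p j) * (x j * ρ i (p i - p j)) := by
    intro i j
    rcases le_or_gt (p i - p j) 0 with h | h
    · rw [hρ0 i _ h]; simp
    · exact mul_nonneg h.le (mul_nonneg (hx0 j) (hρpos i _ h).le)
  have hnonneg : 0 ≤ ∑ i, p i * V i := by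
    rw [key]
    exact Finset.sum_nonneg fun i _ =>
      Finset.sum_nonneg fun j _ => hterm i j
  refine ⟨hnonneg, fun hVne => ?_⟩
  rcases hnonneg.lt_or_eq with h | h
  · exact h
  exfalso
  apply hVne
  have hzero : ∀ i ∈ Finset.univ, ∀ j ∈ Finset.univ,
      (p i - p j) * (x j * ρ i (p i - p j)) = 0 := by
    have h1 : ∑ i, ∑ j, (p i - p j) * (x j * ρ i (p i - p j)) = 0 := by
      rw [← key, ← h]
    intro i hi j hj
    have := (Finset.sum_eq_zero_iff_of_nonneg fun i _ =>
      Finset.sum_nonneg fun j _ => hterm i j).mp h1 i hi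
    exact (Finset.sum_eq_zero_iff_of_nonneg fun j _ => hterm i j).mp this j hj
  have hfac : ∀ i j : Fin n, x j * ρ i (p i - p j) = 0 := by
    intro i j
    rcases le_or_gt (p i - p j) 0 with hle | hlt
    · rw [hρ0 i _ hle]; ring
    · have := hzero i (Finset.mem_univ i) j (Finset.mem_univ j)
      exact (mul_eq_zero.mp this).resolve_left hlt.ne'
  funext i
  rw [hV]
  simp [hfac]
end

section
/- Impartial pairwise comparison rules are Nash stationary: for every x ∈ 𝕏 and p ∈ ℝⁿ, V(x,p) = 0 if and only if x ∈ M(p). -/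
/-- Impartial pairwise comparison rules are Nash stationary:
`V(x,p) = 0` iff `x ∈ M(p)`. -/
theorem ipc_nash_stationary (n : ℕ) (hn : 1 ≤ n)
    (ρ : Fin n → ℝ → ℝ)
    (hρ0 : ∀ j v, v ≤ 0 → ρ j v = 0)
    (hρpos : ∀ j v, 0 < v → 0 < ρ j v)
    (x p : Fin n → ℝ) (hx : x ∈ stdSimplex ℝ (Fin n))
    (V : Fin n → ℝ)
    (hV : ∀ i, V i = ∑ j, (x j * ρ i (p i - p j) - x i * ρ j (p j - p i))) :
    V = 0 ↔ x ∈ bestResponse n p := by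
  have hρnn : ∀ j v, 0 ≤ ρ j v := by
    intro j v
    rcases le_or_gt v 0 with h | h
    · rw [hρ0 j v h]
    · exact (hρpos j v h).le
  have hne : Nonempty (Fin n) := ⟨⟨0, hn⟩⟩
  obtain ⟨i₀, hi₀⟩ := Finite.exists_max p
  constructor
  · intro hV0
    have hS : ∀ k, 0 < x k → p k = p i₀ := by
      by_contra h
      push_neg at h
      obtain ⟨k, hk, hnek⟩ := h
      have hlt : p k < p i₀ := lt_of_le_of_ne (hi₀ k) hnek
      have hpos : 0 < V i₀ := by
        rw [hV]
        have hzero : ∀ j, ρ j (p j - p i₀) = 0 := fun j =>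
          hρ0 j _ (by linarith [hi₀ j])
        have heq : ∀ j ∈ Finset.univ, (x j * ρ i₀ (p i₀ - p j) - x i₀ * ρ j (p j - p i₀))
            = x j * ρ i₀ (p i₀ - p j) := by
          intro j _; rw [hzero j]; ring
        rw [Finset.sum_congr rfl heq]
        apply Finset.sum_pos'
        · intro j _; exact mul_nonneg (hx.1 j) (hρnn _ _)
        · exact ⟨k, Finset.mem_univ k, mul_pos hk (hρpos _ _ (by linarith))⟩
      have : V i₀ = 0 := by rw [hV0]; rfl
      linarith
    refine ⟨hx, fun y hy => ?_⟩
    have hx_sum : ∑ i, p i * x i = p i₀ := by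
      have : ∀ i ∈ Finset.univ, p i * x i = p i₀ * x i := by
        intro i _
        rcases eq_or_lt_of_le (hx.1 i) with h | h
        · rw [← h]; ring
        · rw [hS i h]
      rw [Finset.sum_congr rfl this, ← Finset.mul_sum, hx.2, mul_one]
    rw [hx_sum]
    calc ∑ i, p i * y i ≤ ∑ i, p i₀ * y i :=
          Finset.sum_le_sum fun i _ => mul_le_mul_of_nonneg_right (hi₀ i) (hy.1 i)
      _ = p i₀ := by rw [← Finset.mul_sum, hy.2, mul_one]
  · intro hM
    have hS : ∀ k, 0 < x k → p k = p i₀ := by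
      intro k hk
      by_contra hnek
      have hlt : p k < p i₀ := lt_of_le_of_ne (hi₀ k) hnek
      have hy : (fun j => if j = i₀ then (1 : ℝ) else 0) ∈ stdSimplex ℝ (Fin n) := by
        constructor
        · intro j; dsimp only; split_ifs <;> norm_num
        · simp
      have hle := hM.2 _ hy
      have hymax : ∑ j, p j * (if j = i₀ then (1 : ℝ) else 0) = p i₀ := by simp
      have hxlt : ∑ i, p i * x i < p i₀ := by
        have h1 : ∑ i, p i * x i < ∑ i, p i₀ * x i := by
          apply Finset.sum_lt_sum
          · intro i _; exact mul_le_mul_of_nonneg_right (hi₀ i) (hx.1 i)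
          · exact ⟨k, Finset.mem_univ k, mul_lt_mul_of_pos_right hlt hk⟩
        calc ∑ i, p i * x i < ∑ i, p i₀ * x i := h1
          _ = p i₀ := by rw [← Finset.mul_sum, hx.2, mul_one]
      rw [hymax] at hle
      linarith
    funext i
    show V i = 0
    rw [hV]
    apply Finset.sum_eq_zero
    intro j _
    have h1 : x j * ρ i (p i - p j) = 0 := by
      rcases eq_or_lt_of_le (hx.1 j) with h | h
      · rw [← h]; ring
      · rw [hS j h, hρ0 i _ (by linarith [hi₀ i]), mul_zero]
    have h2 : x i * ρ j (p j - p i) = 0 := by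
      rcases eq_or_lt_of_le (hx.1 i) with h | h
      · rw [← h]; ring
      · rw [hS i h, hρ0 j _ (by linarith [hi₀ j]), mul_zero]
    rw [h1, h2, sub_zero]
end

section
/- Separable excess payoff target rules are positively correlated: for every x ∈ 𝕏 and p ∈ ℝⁿ, pᵀV(x,p) = Σᵢ p̂ᵢ ρᵢ(p̂ᵢ) ≥ 0, where p̂ᵢ := pᵢ − xᵀp, and if V(x,p) ≠ 0 then pᵀV(x,p) > 0. -/
/-- Separable excess payoff target rules are positively correlated:
`pᵀV(x,p) = Σᵢ p̂ᵢ ρᵢ(p̂ᵢ) ≥ 0` where `p̂ᵢ = pᵢ − xᵀp`, and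
`pᵀV(x,p) > 0` whenever `V(x,p) ≠ 0`. -/
theorem sept_positive_correlation (n : ℕ) (hn : 1 ≤ n)
    (ρ : Fin n → ℝ → ℝ)
    (hρ0 : ∀ j v, v ≤ 0 → ρ j v = 0)
    (hρpos : ∀ j v, 0 < v → 0 < ρ j v)
    (x p : Fin n → ℝ) (hx : x ∈ stdSimplex ℝ (Fin n))
    (phat : Fin n → ℝ) (hphat : ∀ i, phat i = p i - ∑ j, x j * p j)
    (V : Fin n → ℝ)
    (hV : ∀ i, V i = ρ i (phat i) - x i * ∑ j, ρ j (phat j)) :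
    (∑ i, p i * V i = ∑ i, phat i * ρ i (phat i)) ∧
    0 ≤ ∑ i, p i * V i ∧ (V ≠ 0 → 0 < ∑ i, p i * V i) := by
  have key : ∑ i, p i * V i = ∑ i, phat i * ρ i (phat i) := by
    have : ∑ i, p i * V i
        = ∑ i, p i * ρ i (phat i) - (∑ i, x i * p i) * ∑ j, ρ j (phat j) := by
      simp only [hV, mul_sub]
      rw [Finset.sum_sub_distrib]
      congr 1
      rw [Finset.sum_mul]
      exact Finset.sum_congr rfl (fun i _ => by ring)
    rw [this, Finset.mul_sum, ← Finset.sum_sub_distrib]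
    congr 1; ext i
    rw [hphat i]; ring
  refine ⟨key, ?_, ?_⟩
  · rw [key]
    apply Finset.sum_nonneg
    intro i _
    rcases le_or_gt (phat i) 0 with h | h
    · rw [hρ0 i _ h]; ring_nf; exact le_refl 0
    · exact le_of_lt (mul_pos h (hρpos i _ h))
  · intro hVne
    rw [key]
    by_cases hall : ∀ i, phat i ≤ 0
    · exfalso; apply hVne; funext i
      rw [hV i]
      have hz : ∀ j : Fin n, ρ j (phat j) = 0 := fun j => hρ0 j _ (hall j)
      simp [hz]
    · push_neg at hall
      obtain ⟨i, hi⟩ := hall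
      apply Finset.sum_pos'
      · intro k _
        rcases le_or_gt (phat k) 0 with h | h
        · rw [hρ0 k _ h]; ring_nf; exact le_refl 0
        · exact le_of_lt (mul_pos h (hρpos k _ h))
      · exact ⟨i, Finset.mem_univ i, mul_pos hi (hρpos i _ hi)⟩
end

section
/- Separable excess payoff target rules are Nash stationary: for every x ∈ 𝕏 and p ∈ ℝⁿ, V(x,p) = 0 if and only if x ∈ M(p). -/
/-- Separable excess payoff target rules are Nash stationary:
`V(x,p) = 0` iff `x ∈ M(p)`. -/
theorem sept_nash_stationary (n : ℕ) (hn : 1 ≤ n)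
    (ρ : Fin n → ℝ → ℝ)
    (hρ0 : ∀ j v, v ≤ 0 → ρ j v = 0)
    (hρpos : ∀ j v, 0 < v → 0 < ρ j v)
    (x p : Fin n → ℝ) (hx : x ∈ stdSimplex ℝ (Fin n))
    (V : Fin n → ℝ)
    (hV : ∀ i, V i = ρ i (p i - ∑ j, x j * p j) - x i * ∑ j, ρ j (p j - ∑ k, x k * p k)) :
    V = 0 ↔ x ∈ bestResponse n p := by
  set π := ∑ j, x j * p j with hπ
  set S := ∑ j, ρ j (p j - π) with hS
  have hρnn : ∀ j v, 0 ≤ ρ j v := by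
    intro j v
    rcases le_or_gt v 0 with h | h
    · exact le_of_eq (hρ0 j v h).symm
    · exact (hρpos j v h).le
  have hkey : x ∈ bestResponse n p ↔ ∀ i, p i ≤ π := by
    constructor
    · rintro ⟨hx', hmax⟩ i
      have hy : (fun j => if j = i then (1:ℝ) else 0) ∈ stdSimplex ℝ (Fin n) := by
        constructor
        · intro j; dsimp only; split <;> norm_num
        · simp
      have := hmax _ hy
      simpa [hπ, mul_comm] using this
    · intro h
      refine ⟨hx, fun y hy => ?_⟩
      calc ∑ i, p i * y i ≤ ∑ i, π * y i :=
            Finset.sum_le_sum (fun i _ => mul_le_mul_of_nonneg_right (h i) (hy.1 i))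
        _ = π := by rw [← Finset.mul_sum, hy.2, mul_one]
        _ = ∑ i, p i * x i := by rw [hπ]; exact Finset.sum_congr rfl fun i _ => mul_comm _ _
  rw [hkey]
  constructor
  · intro hV0 i
    by_contra hpi
    push_neg at hpi
    have hVi : ∀ j, V j = 0 := fun j => congrFun hV0 j
    have heq : ∀ j, ρ j (p j - π) = x j * S := by
      intro j
      have := hVi j
      rw [hV j] at this
      linarith
    have hρi : 0 < ρ i (p i - π) := hρpos i _ (by linarith)
    have hxiS : 0 < x i * S := heq i ▸ hρi
    have hSpos : 0 < S := by
      by_contra hS'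
      push_neg at hS'
      nlinarith [hx.1 i]
    have hsupp : ∀ j, x j ≠ 0 → π < p j := by
      intro j hj
      by_contra hle
      push_neg at hle
      have h0 : ρ j (p j - π) = 0 := hρ0 j _ (by linarith)
      have hxj : 0 < x j := lt_of_le_of_ne (hx.1 j) (Ne.symm hj)
      nlinarith [heq j]
    have hT : ∑ j, x j * (p j - π) = 0 := by
      have : ∑ j, x j * (p j - π) = (∑ j, x j * p j) - (∑ j, x j) * π := by
        rw [Finset.sum_mul]
        rw [← Finset.sum_sub_distrib]
        exact Finset.sum_congr rfl fun j _ => by ring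
      rw [this, hx.2, one_mul, hπ, sub_self]
    obtain ⟨j0, _, hj0⟩ : ∃ j ∈ Finset.univ, x j ≠ 0 := by
      apply Finset.exists_ne_zero_of_sum_ne_zero
      rw [hx.2]; norm_num
    have hpos : 0 < ∑ j, x j * (p j - π) := by
      apply Finset.sum_pos'
      · intro j _
        rcases eq_or_ne (x j) 0 with h | h
        · simp [h]
        · have := hsupp j h
          have hxj : 0 < x j := lt_of_le_of_ne (hx.1 j) (Ne.symm h)
          nlinarith
      · refine ⟨j0, Finset.mem_univ _, ?_⟩
        have := hsupp j0 hj0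
        have hxj : 0 < x j0 := lt_of_le_of_ne (hx.1 j0) (Ne.symm hj0)
        nlinarith
    linarith
  · intro h
    have hS0 : S = 0 := Finset.sum_eq_zero fun j _ => hρ0 j _ (by linarith [h j])
    funext i
    rw [hV i, hS0, hρ0 i _ (by linarith [h i])]
    simp
end

section
/- The pair (I*, R*) is an equilibrium of the SIRS dynamics: (B(1 − I* − R*) + δI* − σ)I* = 0 and γI* − ωR* + δR*I* = 0, where I* := (b_B − √(b_B² − 4δω(B−δ)(B−σ)))/(2δ(B−δ)) with b_B := γB + ω(B−δ) + δ(B−σ), and R* := (1 − σ/B) − (1 − δ/B)I*. -/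
/-- `(I*, R*)` is an equilibrium of the normalized SIRS dynamics. -/
theorem sirs_endemic_equilibrium
    (γ ω δ σ B : ℝ)
    (hδ : 0 < δ) (hδω : δ < ω) (hδγ : δ < γ) (hσ : γ + δ ≤ σ) (hB : σ < B)
    (bB Istar Rstar : ℝ)
    (hbB : bB = γ * B + ω * (B - δ) + δ * (B - σ))
    (hIstar : Istar =
      (bB - Real.sqrt (bB ^ 2 - 4 * δ * ω * (B - δ) * (B - σ))) / (2 * δ * (B - δ)))
    (hRstar : Rstar = (1 - σ / B) - (1 - δ / B) * Istar) :
    (B * (1 - Istar - Rstar) + δ * Istar - σ) * Istar = 0 ∧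
    γ * Istar - ω * Rstar + δ * Rstar * Istar = 0 := by
  subst hbB hRstar
  have hBδ : (0:ℝ) < B - δ := by linarith
  have hB0 : (0:ℝ) < B := by linarith
  have hBne : B ≠ 0 := ne_of_gt hB0
  have hγ0 : (0:ℝ) < γ := by linarith
  have hω0 : (0:ℝ) < ω := by linarith
  have hBσ : (0:ℝ) < B - σ := by linarith
  set bB : ℝ := γ * B + ω * (B - δ) + δ * (B - σ) with hbB
  have hD : 0 ≤ bB ^ 2 - 4 * δ * ω * (B - δ) * (B - σ) := by
    rw [hbB]
    nlinarith [sq_nonneg (ω * (B - δ) - δ * (B - σ)), sq_nonneg (γ * B),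
      mul_pos (mul_pos hγ0 hB0) (mul_pos hω0 hBδ),
      mul_pos (mul_pos hγ0 hB0) (mul_pos hδ hBσ)]
  set s := Real.sqrt (bB ^ 2 - 4 * δ * ω * (B - δ) * (B - σ)) with hs
  have hs2 : s ^ 2 = bB ^ 2 - 4 * δ * ω * (B - δ) * (B - σ) := Real.sq_sqrt hD
  have hden : 2 * δ * (B - δ) ≠ 0 := by
    exact mul_ne_zero (by positivity) (ne_of_gt hBδ)
  have hI' : Istar * (2 * δ * (B - δ)) = bB - s := by
    rw [hIstar]; field_simp
  have hsI : s = bB - 2 * δ * (B - δ) * Istar := by linarith [hI']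
  rw [hsI] at hs2
  have h4 : (4:ℝ) * δ * (B - δ) ≠ 0 := mul_ne_zero (by positivity) (ne_of_gt hBδ)
  have hquad : δ * (B - δ) * Istar ^ 2 - bB * Istar + ω * (B - σ) = 0 := by
    have key : 4 * δ * (B - δ) * (δ * (B - δ) * Istar ^ 2 - bB * Istar + ω * (B - σ)) = 0 := by
      linear_combination hs2
    exact (mul_eq_zero.mp key).resolve_left h4
  rw [hbB] at hquad
  constructor
  · field_simp; ring
  · have key2 : B * (γ * Istar - ω * (1 - σ / B - (1 - δ / B) * Istar) +
        δ * (1 - σ / B - (1 - δ / B) * Istar) * Istar) = 0 := by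
      field_simp
      linear_combination -hquad
    have := mul_eq_zero.mp key2
    tauto
end

section
/- The endemic equilibrium lies in the interior of the state space: under the stated parameter assumptions, I* ∈ (0,1), R* > 0, and I* + R* < 1, where I* := (b_B − √(b_B² − 4δω(B−δ)(B−σ)))/(2δ(B−δ)) with b_B := γB + ω(B−δ) + δ(B−σ), and R* := (1 − σ/B) − (1 − δ/B)I*. -/
set_option maxHeartbeats 1000000

/-- The endemic equilibrium lies in the interior of the state space:
`I* ∈ (0,1)`, `R* > 0`, and `I* + R* < 1`. -/
theorem sirs_endemic_equilibrium_interior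
    (γ ω δ σ B : ℝ)
    (hδ : 0 < δ) (hδω : δ < ω) (hδγ : δ < γ) (hσ : γ + δ ≤ σ) (hB : σ < B)
    (bB Istar Rstar : ℝ)
    (hbB : bB = γ * B + ω * (B - δ) + δ * (B - σ))
    (hIstar : Istar =
      (bB - Real.sqrt (bB ^ 2 - 4 * δ * ω * (B - δ) * (B - σ))) / (2 * δ * (B - δ)))
    (hRstar : Rstar = (1 - σ / B) - (1 - δ / B) * Istar) :
    0 < Istar ∧ Istar < 1 ∧ 0 < Rstar ∧ Istar + Rstar < 1 := by
  have hBpos : (0:ℝ) < B := by linarith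
  have hBδ : (0:ℝ) < B - δ := by linarith
  have hBσ : (0:ℝ) < B - σ := by linarith
  have hγ : (0:ℝ) < γ := by linarith
  have hω : (0:ℝ) < ω := by linarith
  set D := bB ^ 2 - 4 * δ * ω * (B - δ) * (B - σ) with hD
  have hbBpos : 0 < bB := by
    rw [hbB]; nlinarith [mul_pos hγ hBpos, mul_pos hω hBδ, mul_pos hδ hBσ]
  have hDnn : 0 ≤ D := by
    rw [hD, hbB]
    nlinarith [sq_nonneg (ω * (B - δ) - δ * (B - σ)), sq_nonneg (γ * B),
      mul_pos (mul_pos hγ hBpos) (add_pos (mul_pos hω hBδ) (mul_pos hδ hBσ))]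
  set s := Real.sqrt D with hsdef
  have hs0 : 0 ≤ s := Real.sqrt_nonneg _
  have hs2 : s ^ 2 = D := Real.sq_sqrt hDnn
  have ha : (0:ℝ) < 2 * δ * (B - δ) := by positivity
  have hsb : s < bB := by
    nlinarith [mul_pos (mul_pos (mul_pos hδ hω) hBδ) hBσ]
  have hI0 : 0 < Istar := by
    rw [hIstar]; exact div_pos (by linarith) ha
  have hkey1 : (0:ℝ) < bB - δ * (B - δ) - ω * (B - σ) := by
    rw [hbB]; nlinarith [mul_pos hγ hBpos, mul_pos (show (0:ℝ) < ω - δ by linarith)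
      (show (0:ℝ) < σ - δ by linarith)]
  have hs1 : bB - 2 * δ * (B - δ) < s := by
    nlinarith [mul_pos ha hkey1, mul_nonneg hs0 hs0]
  have hI1 : Istar < 1 := by
    rw [hIstar, div_lt_one ha]; linarith
  have hs3 : bB - 2 * δ * (B - σ) < s := by
    nlinarith [mul_pos (mul_pos (mul_pos hδ hBσ) hγ) hBpos, mul_nonneg hs0 hs0]
  have hkey2 : (B - δ) * Istar < B - σ := by
    rw [hIstar, show (B - δ) * ((bB - s) / (2 * δ * (B - δ))) = (bB - s) / (2 * δ) by
      field_simp, div_lt_iff₀ (by positivity : (0:ℝ) < 2 * δ)]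
    linarith
  have hR0 : 0 < Rstar := by
    rw [hRstar, show (1 - σ / B) - (1 - δ / B) * Istar
        = ((B - σ) - (B - δ) * Istar) / B by have hBne : B ≠ 0 := ne_of_gt hBpos; field_simp; try ring]
    exact div_pos (by linarith) hBpos
  refine ⟨hI0, hI1, hR0, ?_⟩
  rw [hRstar, show Istar + ((1 - σ / B) - (1 - δ / B) * Istar)
      = 1 + (δ * Istar - σ) / B by have hBne : B ≠ 0 := ne_of_gt hBpos; field_simp; try ring]
  have : δ * Istar < σ := by nlinarith
  have : (δ * Istar - σ) / B < 0 := div_neg_of_neg_of_pos (by linarith) hBpos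
  linarith
end

section
/- Let (I*, R*) with I* > 0 and γ + δR* > 0 satisfy the SIRS equilibrium equations B(1 − I* − R*) + δI* − σ = 0 and γI* − ωR* + δR*I* = 0, and set a := B/(γ + δR*). Then for all I > 0 and all R ∈ ℝ, the directional derivative of Ũ(I,R) := (I − I*) + I* ln(I*/I) + (a/2)(R − R*)² along the SIRS vector field satisfies the identity ∂Ũ/∂I · (B(1−I−R) + δI − σ)I + ∂Ũ/∂R · (γI − ωR + δRI) = −(B − δ)(I − I*)² − a(ω − δI)(R − R*)². -/
/-- Directional-derivative identity for the SIRS Lyapunov function: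
`∂Ũ/∂I · f₁ + ∂Ũ/∂R · f₂ = −(B − δ)(I − I*)² − a(ω − δI)(R − R*)²`. -/
theorem sirs_lyapunov_derivative_identity
    (γ ω δ σ B : ℝ)
    (hδ : 0 < δ) (hδω : δ < ω) (hδγ : δ < γ) (hσ : γ + δ ≤ σ) (hB : σ < B)
    (Istar Rstar : ℝ) (hIstar : 0 < Istar) (hden : 0 < γ + δ * Rstar)
    (heq1 : B * (1 - Istar - Rstar) + δ * Istar - σ = 0)
    (heq2 : γ * Istar - ω * Rstar + δ * Rstar * Istar = 0)
    (a : ℝ) (ha : a = B / (γ + δ * Rstar))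
    (Ut : ℝ → ℝ → ℝ)
    (hUt : ∀ I R, Ut I R =
      (I - Istar) + Istar * Real.log (Istar / I) + (a / 2) * (R - Rstar) ^ 2)
    (I R : ℝ) (hI : 0 < I) :
    deriv (fun I' => Ut I' R) I * ((B * (1 - I - R) + δ * I - σ) * I) +
      deriv (fun R' => Ut I R') R * (γ * I - ω * R + δ * R * I) =
    -(B - δ) * (I - Istar) ^ 2 - a * (ω - δ * I) * (R - Rstar) ^ 2 := by

  have hI' : I ≠ 0 := ne_of_gt hI
  have hBa : a * (γ + δ * Rstar) = B := by
    rw [ha]; field_simp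
  -- derivative in I
  have h1 : deriv (fun I' => Ut I' R) I = 1 - Istar / I := by
    have hev : (fun I' => Ut I' R) =ᶠ[nhds I]
        (fun I' => (I' - Istar) + Istar * (Real.log Istar - Real.log I')
          + (a / 2) * (R - Rstar) ^ 2) := by
      filter_upwards [eventually_gt_nhds hI] with x hx
      rw [hUt, Real.log_div (ne_of_gt hIstar) (ne_of_gt hx)]
    rw [Filter.EventuallyEq.deriv_eq hev]
    have hd : HasDerivAt (fun I' => (I' - Istar) + Istar * (Real.log Istar - Real.log I')
          + (a / 2) * (R - Rstar) ^ 2) (1 - Istar / I) I := by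
      have hlog : HasDerivAt (fun I' : ℝ => Real.log I') I⁻¹ I := Real.hasDerivAt_log hI'
      have h2 : HasDerivAt (fun I' : ℝ => Real.log Istar - Real.log I') (0 - I⁻¹) I :=
        (hasDerivAt_const I (Real.log Istar)).sub hlog
      have h3 : HasDerivAt (fun I' : ℝ => Istar * (Real.log Istar - Real.log I'))
          (Istar * (0 - I⁻¹)) I := h2.const_mul Istar
      have h4 : HasDerivAt (fun I' : ℝ => I' - Istar) 1 I :=
        (hasDerivAt_id I).sub_const Istar
      have h5 := (h4.add h3).add_const ((a / 2) * (R - Rstar) ^ 2)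
      refine h5.congr_deriv ?_
      rw [div_eq_mul_inv]
      ring
    exact hd.deriv
  -- derivative in R
  have h2 : deriv (fun R' => Ut I R') R = a * (R - Rstar) := by
    have : (fun R' => Ut I R') = fun R' => (I - Istar) + Istar * Real.log (Istar / I)
        + (a / 2) * (R' - Rstar) ^ 2 := by
      funext R'; rw [hUt]
    rw [this]
    have hd : HasDerivAt (fun R' => (I - Istar) + Istar * Real.log (Istar / I)
        + (a / 2) * (R' - Rstar) ^ 2) (a * (R - Rstar)) R := by
      have h4 : HasDerivAt (fun R' : ℝ => R' - Rstar) 1 R :=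
        (hasDerivAt_id R).sub_const Rstar
      have h5 : HasDerivAt (fun R' : ℝ => (R' - Rstar) ^ 2) (2 * (R - Rstar) ^ 1 * 1) R :=
        h4.pow 2
      have h6 := h5.const_mul (a / 2)
      have h7 := (hasDerivAt_const R ((I - Istar) + Istar * Real.log (Istar / I))).add h6
      refine h7.congr_deriv ?_
      ring
    exact hd.deriv
  rw [h1, h2]
  have key : (1 - Istar / I) * ((B * (1 - I - R) + δ * I - σ) * I)
      = (I - Istar) * (B * (1 - I - R) + δ * I - σ) := by
    field_simp
  rw [key]
  linear_combination (I - Istar) * heq1 + a * (R - Rstar) * heq2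
    + (I - Istar) * (R - Rstar) * hBa
end

section
/- Ũ is a strict Lyapunov function for the SIRS model: let (I*, R*) with I* > 0 and γ + δR* > 0 satisfy B(1 − I* − R*) + δI* − σ = 0 and γI* − ωR* + δR*I* = 0, and set a := B/(γ + δR*) with a > 0. Then for every (I,R) ∈ (0,1] × [0,1] with (I,R) ≠ (I*,R*), the directional derivative of Ũ(I,R) := (I − I*) + I* ln(I*/I) + (a/2)(R − R*)² along the SIRS vector field is strictly negative. -/
/-- `Ũ` is a strict Lyapunov function for the SIRS model: at every
`(I,R) ∈ (0,1] × [0,1]` with `(I,R) ≠ (I*,R*)`, the directional derivative of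
`Ũ` along the SIRS vector field is strictly negative. -/
theorem sirs_lyapunov_strict
    (γ ω δ σ B : ℝ)
    (hδ : 0 < δ) (hδω : δ < ω) (hδγ : δ < γ) (hσ : γ + δ ≤ σ) (hB : σ < B)
    (Istar Rstar : ℝ) (hIstar : 0 < Istar) (hden : 0 < γ + δ * Rstar)
    (heq1 : B * (1 - Istar - Rstar) + δ * Istar - σ = 0)
    (heq2 : γ * Istar - ω * Rstar + δ * Rstar * Istar = 0)
    (a : ℝ) (ha : a = B / (γ + δ * Rstar)) (hapos : 0 < a)
    (Ut : ℝ → ℝ → ℝ)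
    (hUt : ∀ I R, Ut I R =
      (I - Istar) + Istar * Real.log (Istar / I) + (a / 2) * (R - Rstar) ^ 2)
    (I R : ℝ) (hI : I ∈ Set.Ioc (0 : ℝ) 1) (hR : R ∈ Set.Icc (0 : ℝ) 1)
    (hne : (I, R) ≠ (Istar, Rstar)) :
    deriv (fun I' => Ut I' R) I * ((B * (1 - I - R) + δ * I - σ) * I) +
      deriv (fun R' => Ut I R') R * (γ * I - ω * R + δ * R * I) < 0 := by
  obtain ⟨hI0, hI1⟩ := hI
  have hIne : I ≠ 0 := hI0.ne'
  -- compute the I-derivative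
  have hd1 : HasDerivAt (fun I' => Ut I' R) (1 - Istar / I) I := by
    have h0 : HasDerivAt (fun x : ℝ => Istar / x) (Istar * (-(I ^ 2)⁻¹)) I := by
      simpa [div_eq_mul_inv] using (hasDerivAt_inv hIne).const_mul Istar
    have hq : Istar / I ≠ 0 := div_ne_zero hIstar.ne' hIne
    have hlog : HasDerivAt (fun x : ℝ => Real.log (Istar / x))
        (Istar * (-(I ^ 2)⁻¹) / (Istar / I)) I := h0.log hq
    have h2 : HasDerivAt (fun I' : ℝ => (I' - Istar) + Istar * Real.log (Istar / I')
        + (a / 2) * (R - Rstar) ^ 2)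
        ((1 + Istar * (Istar * (-(I ^ 2)⁻¹) / (Istar / I))) + 0) I := by
      simpa using (((hasDerivAt_id I).sub_const Istar).add (hlog.const_mul Istar)).add_const ((a / 2) * (R - Rstar) ^ 2)
    have heqv : (fun I' => Ut I' R) = fun I' : ℝ => (I' - Istar) +
        Istar * Real.log (Istar / I') + (a / 2) * (R - Rstar) ^ 2 := by
      funext x; exact hUt x R
    rw [heqv]
    convert h2 using 1
    field_simp
    ring
  -- compute the R-derivative
  have hd2 : HasDerivAt (fun R' => Ut I R') (a * (R - Rstar)) R := by
    have h2 : HasDerivAt (fun R' : ℝ => (I - Istar) + Istar * Real.log (Istar / I)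
        + (a / 2) * (R' - Rstar) ^ 2)
        (0 + (a / 2) * (2 * (R - Rstar) ^ 1 * 1)) R := by
      exact (hasDerivAt_const R _).add
        ((((hasDerivAt_id R).sub_const Rstar).pow 2).const_mul (a / 2))
    have heqv : (fun R' => Ut I R') = fun R' : ℝ => (I - Istar) +
        Istar * Real.log (Istar / I) + (a / 2) * (R' - Rstar) ^ 2 := by
      funext x; exact hUt I x
    rw [heqv]
    convert h2 using 1
    ring
  rw [hd1.deriv, hd2.deriv]
  have hab : a * (γ + δ * Rstar) = B := by
    rw [ha]; field_simp
  have key : (1 - Istar / I) * ((B * (1 - I - R) + δ * I - σ) * I) +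
      a * (R - Rstar) * (γ * I - ω * R + δ * R * I) =
      (δ - B) * (I - Istar) ^ 2 + a * (δ * I - ω) * (R - Rstar) ^ 2 := by
    have h1 : (1 - Istar / I) * ((B * (1 - I - R) + δ * I - σ) * I) =
        (I - Istar) * (B * (1 - I - R) + δ * I - σ) := by
      field_simp
    rw [h1]
    linear_combination (I - Istar) * heq1 + a * (R - Rstar) * heq2 +
      (I - Istar) * (R - Rstar) * hab
  rw [key]
  have hδB : δ - B < 0 := by linarith
  have hc2 : δ * I - ω < 0 := by nlinarith
  have hxy : I - Istar ≠ 0 ∨ R - Rstar ≠ 0 := by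
    by_contra h
    push_neg at h
    exact hne (by
      have h1 : I = Istar := by linarith [h.1, sub_eq_zero.mp h.1]
      have h2 : R = Rstar := by linarith [sub_eq_zero.mp h.2]
      rw [h1, h2])
  rcases hxy with hx | hy
  · have h1 : (δ - B) * (I - Istar) ^ 2 < 0 :=
      mul_neg_of_neg_of_pos hδB (by positivity)
    have h2 : a * (δ * I - ω) * (R - Rstar) ^ 2 ≤ 0 := by
      apply mul_nonpos_of_nonpos_of_nonneg
      · exact (mul_neg_of_pos_of_neg hapos hc2).le
      · positivity
    linarith
  · have h1 : (δ - B) * (I - Istar) ^ 2 ≤ 0 := by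
      apply mul_nonpos_of_nonpos_of_nonneg hδB.le (by positivity)
    have h2 : a * (δ * I - ω) * (R - Rstar) ^ 2 < 0 :=
      mul_neg_of_neg_of_pos (mul_neg_of_pos_of_neg hapos hc2) (by positivity)
    linarith
end
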